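/- Let f : {0,1}ⁿ → ℝ satisfy condition (3.1) with nonnegative nondecreasing function ϕ and constant B, where B = max over x ∈ {0,1}ⁿ and 1 ≤ i ≤ n of |f(x) − f(x^{(i)})|. Then for all real numbers b > a ≥ Mf (the median of f(X)) with P{f(X) ≥ b} > 0, one has b − a ≤ sqrt( (72/5)·ϕ(b+B)·P{f(X) > a} / ( P{f(X) ≥ b} · log( e² / (2·P{f(X) > a}) ) ) ). -/

import Mathlib

open scoped Classical
open Finset

/-- Probability of an event under the uniform distribution on `{0,1}ⁿ`. -/
noncomputable def prb {n : ℕ} (P : (Fin n → Fin 2) → Prop) : ℝ :=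
  ((Finset.univ.filter P).card : ℝ) / 2 ^ n

/-- `x^{(i)}`: flip the `i`-th bit of `x`. -/
noncomputable def flipBit {n : ℕ} (x : Fin n → Fin 2) (i : Fin n) : Fin n → Fin 2 :=
  Function.update x i (x i + 1)

/-- The `α`-quantile `Q_α = inf { z : P{f(X) ≤ z} ≥ α }`. -/
noncomputable def quant {n : ℕ} (f : (Fin n → Fin 2) → ℝ) (α : ℝ) : ℝ :=
  sInf {z : ℝ | α ≤ prb fun x => f x ≤ z}

/-- Expectation of `f(X)` for `X` uniform on `{0,1}ⁿ`. -/
noncomputable def expecb {n : ℕ} (f : (Fin n → Fin 2) → ℝ) : ℝ :=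
  (∑ x, f x) / 2 ^ n

/-- Variance of `f(X)` for `X` uniform on `{0,1}ⁿ`. -/
noncomputable def varb {n : ℕ} (f : (Fin n → Fin 2) → ℝ) : ℝ :=
  expecb fun x => (f x - expecb f) ^ 2

/-!
Let `g = proj_[a,b] ∘ f - a`. The log-Sobolev inequality on the cube,
`Ent (g²) ≤ 2 E ∑ᵢ (g - g ∘ flipᵢ)₊²`, follows by averaging out one coordinate at a time, each
step costing a two-point entropy, which is at most half a triangular discrimination
`(u - v)² / (u + v)`. By (3.1) the right-hand side is at most `2 φ(b + B) P{f > a}`: clipping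
only shrinks positive parts, the sum vanishes where `f ≤ a`, and where `f > b + B` all
neighbours are clipped to `b`. Conversely `g²` is supported on `{f > a}` and equals `(b - a)²`
on `{f ≥ b}`, so Jensen's inequality gives
`Ent (g²) ≥ (b - a)² P{f ≥ b} log (1 / P{f > a})`. Finally `a ≥ Mf` forces `P{f > a} ≤ 1/2`,
whence `log (e² / 2P{f > a}) ≤ 3 log (1 / P{f > a})`.
-/

open Real

section Cube

variable {n : ℕ}

lemma Fin.two_eq_add_one_of_ne {v w : Fin 2} (h : v ≠ w) : v = w + 1 := by
  revert v w; decide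

lemma flipBit_apply_self (x : Fin n → Fin 2) (i : Fin n) : flipBit x i i = x i + 1 :=
  Function.update_self ..

lemma flipBit_apply_of_ne (x : Fin n → Fin 2) {i j : Fin n} (h : j ≠ i) :
    flipBit x i j = x j :=
  Function.update_of_ne h ..

lemma flipBit_flipBit (x : Fin n → Fin 2) (i : Fin n) : flipBit (flipBit x i) i = x := by
  funext j
  rcases eq_or_ne j i with rfl | h
  · rw [flipBit_apply_self, flipBit_apply_self, add_assoc]
    exact add_eq_left.2 (by decide)
  · rw [flipBit_apply_of_ne _ h, flipBit_apply_of_ne _ h]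

lemma flipBit_comm (x : Fin n → Fin 2) {i j : Fin n} (h : i ≠ j) :
    flipBit (flipBit x i) j = flipBit (flipBit x j) i := by
  simp only [flipBit, Function.update_of_ne h, Function.update_of_ne h.symm]
  exact Function.update_comm h _ _ x

lemma flipBit_involutive (i : Fin n) : Function.Involutive (flipBit · i) :=
  fun x => flipBit_flipBit x i

lemma sum_comp_flipBit {M : Type*} [AddCommMonoid M] (i : Fin n) (F : (Fin n → Fin 2) → M) :
    ∑ x, F (flipBit x i) = ∑ x, F x :=
  Equiv.sum_comp ((flipBit_involutive i).toPerm _) F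

lemma expecb_comp_flipBit (i : Fin n) (F : (Fin n → Fin 2) → ℝ) :
    expecb (fun x => F (flipBit x i)) = expecb F := by
  rw [expecb, sum_comp_flipBit i F, expecb]

lemma expecb_mono {F G : (Fin n → Fin 2) → ℝ} (h : ∀ x, F x ≤ G x) : expecb F ≤ expecb G :=
  div_le_div_of_nonneg_right (sum_le_sum fun x _ => h x) (by positivity)

lemma expecb_add (F G : (Fin n → Fin 2) → ℝ) :
    expecb (fun x => F x + G x) = expecb F + expecb G := by
  simp only [expecb, sum_add_distrib, add_div]

lemma expecb_sub (F G : (Fin n → Fin 2) → ℝ) :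
    expecb (fun x => F x - G x) = expecb F - expecb G := by
  simp only [expecb, sum_sub_distrib, sub_div]

lemma expecb_mul_const (F : (Fin n → Fin 2) → ℝ) (c : ℝ) :
    expecb (fun x => F x * c) = expecb F * c := by
  simp only [expecb, ← sum_mul, div_mul_eq_mul_div]

lemma expecb_div_const (F : (Fin n → Fin 2) → ℝ) (c : ℝ) :
    expecb (fun x => F x / c) = expecb F / c := by
  simp only [div_eq_mul_inv, expecb_mul_const]

lemma expecb_sum {ι : Type*} (s : Finset ι) (F : ι → (Fin n → Fin 2) → ℝ) :
    expecb (fun x => ∑ j ∈ s, F j x) = ∑ j ∈ s, expecb (F j) := by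
  simp only [expecb, ← sum_div]
  rw [sum_comm]

lemma card_cube : (Fintype.card (Fin n → Fin 2) : ℝ) = 2 ^ n := by
  simp

lemma expecb_const (c : ℝ) : expecb (fun _ : Fin n → Fin 2 => c) = c := by
  rw [expecb, sum_const, card_univ, nsmul_eq_mul, card_cube, mul_div_cancel_left₀ _ (by positivity)]

lemma expecb_ite (P : (Fin n → Fin 2) → Prop) (c : ℝ) :
    expecb (fun x => if P x then c else 0) = c * prb P := by
  rw [expecb, ← sum_filter, sum_const, nsmul_eq_mul, prb]
  ring

lemma prb_eq_card_div (P : (Fin n → Fin 2) → Prop) [DecidablePred P] :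
    prb P = (#{x | P x} : ℝ) / 2 ^ n := by
  rw [prb, filter_congr_decidable]

lemma prb_mono {P Q : (Fin n → Fin 2) → Prop} (h : ∀ x, P x → Q x) : prb P ≤ prb Q := by
  unfold prb
  gcongr
  exact h _

lemma prb_eq_one {P : (Fin n → Fin 2) → Prop} (h : ∀ x, P x) : prb P = 1 := by
  rw [prb, filter_true_of_mem fun x _ => h x, card_univ, card_cube, div_self (by positivity)]

lemma prb_add_prb_not (P : (Fin n → Fin 2) → Prop) : prb P + prb (fun x => ¬ P x) = 1 := by
  rw [prb, prb, ← add_div, ← Nat.cast_add, card_filter_add_card_filter_not, card_univ, card_cube,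
    div_self (by positivity)]

end Cube

section Entropy

variable {n : ℕ}

noncomputable def entb (h : (Fin n → Fin 2) → ℝ) : ℝ :=
  expecb (fun x => h x * log (h x)) - expecb h * log (expecb h)

noncomputable def entTwo (u v : ℝ) : ℝ :=
  (u * log u + v * log v) / 2 - (u + v) / 2 * log ((u + v) / 2)

/-- The triangular discrimination; the junk value `0 / 0 = 0` is the right value at the origin. -/
noncomputable def triDisc (u v : ℝ) : ℝ :=
  (u - v) ^ 2 / (u + v)

noncomputable def avgFlip (i : Fin n) (h : (Fin n → Fin 2) → ℝ) (x : Fin n → Fin 2) : ℝ :=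
  (h x + h (flipBit x i)) / 2

lemma mul_log_le_mul_log_add_sq_div_sub {t m : ℝ} (ht : 0 ≤ t) (hm : 0 < m) :
    t * log t ≤ t * log m + t ^ 2 / m - t := by
  rcases ht.eq_or_lt with rfl | ht
  · simp
  have hlog := log_le_sub_one_of_pos (div_pos ht hm)
  rw [log_div ht.ne' hm.ne'] at hlog
  have hexpand : t * (t / m - 1) = t ^ 2 / m - t := by field_simp
  nlinarith [mul_le_mul_of_nonneg_left hlog ht.le]

lemma entTwo_le_triDisc {u v : ℝ} (hu : 0 ≤ u) (hv : 0 ≤ v) : entTwo u v ≤ triDisc u v / 2 := by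
  rcases (add_nonneg hu hv).eq_or_lt with huv | huv
  · obtain ⟨rfl, rfl⟩ : u = 0 ∧ v = 0 := ⟨by linarith, by linarith⟩
    simp [entTwo, triDisc]
  have hm : 0 < (u + v) / 2 := by positivity
  have hsum : ((u * log ((u + v) / 2) + u ^ 2 / ((u + v) / 2) - u)
        + (v * log ((u + v) / 2) + v ^ 2 / ((u + v) / 2) - v)) / 2
      - (u + v) / 2 * log ((u + v) / 2) = (u - v) ^ 2 / (u + v) / 2 := by
    field_simp
    ring
  unfold entTwo triDisc
  linarith [mul_log_le_mul_log_add_sq_div_sub hu hm, mul_log_le_mul_log_add_sq_div_sub hv hm]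

lemma triDisc_half (u v : ℝ) : triDisc (u / 2) (v / 2) = triDisc u v / 2 := by
  rw [triDisc, triDisc, ← sub_div, ← add_div]
  simp only [div_eq_mul_inv, mul_inv, inv_inv]
  ring

lemma triDisc_add_le {u₁ v₁ u₂ v₂ : ℝ} (hu₁ : 0 ≤ u₁) (hv₁ : 0 ≤ v₁) (hu₂ : 0 ≤ u₂)
    (hv₂ : 0 ≤ v₂) : triDisc (u₁ + u₂) (v₁ + v₂) ≤ triDisc u₁ v₁ + triDisc u₂ v₂ := by
  rcases (add_nonneg hu₁ hv₁).eq_or_lt with h₁ | h₁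
  · obtain ⟨rfl, rfl⟩ : u₁ = 0 ∧ v₁ = 0 := ⟨by linarith, by linarith⟩
    simp [triDisc]
  rcases (add_nonneg hu₂ hv₂).eq_or_lt with h₂ | h₂
  · obtain ⟨rfl, rfl⟩ : u₂ = 0 ∧ v₂ = 0 := ⟨by linarith, by linarith⟩
    simp [triDisc]
  unfold triDisc
  rw [div_add_div _ _ h₁.ne' h₂.ne', div_le_div_iff₀ (by linarith) (by positivity)]
  nlinarith [sq_nonneg ((u₁ - v₁) * (u₂ + v₂) - (u₂ - v₂) * (u₁ + v₁))]

lemma triDisc_sq_le (c d : ℝ) : triDisc (c ^ 2) (d ^ 2) / 2 ≤ (c - d) ^ 2 := by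
  unfold triDisc
  rcases (add_nonneg (sq_nonneg c) (sq_nonneg d)).eq_or_lt with h | h
  · rw [← h, div_zero, zero_div]
    positivity
  rw [div_div, div_le_iff₀ (by positivity)]
  -- `2 (c² + d²) - (c + d)² = (c - d)²`
  nlinarith [sq_nonneg ((c - d) ^ 2)]

lemma entb_const (c : ℝ) : entb (fun _ : Fin n → Fin 2 => c) = 0 := by
  rw [entb, expecb_const, expecb_const, sub_self]

lemma entb_eq_expecb_entTwo_add_entb_avgFlip (i : Fin n) (h : (Fin n → Fin 2) → ℝ) :
    entb h = expecb (fun x => entTwo (h x) (h (flipBit x i))) + entb (avgFlip i h) := by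
  have hmean : expecb (avgFlip i h) = expecb h := by
    unfold avgFlip
    simp only [expecb_div_const, expecb_add, expecb_comp_flipBit i h]
    ring
  have hpair : expecb (fun x => entTwo (h x) (h (flipBit x i)))
      = expecb (fun x => h x * log (h x))
        - expecb (fun x => avgFlip i h x * log (avgFlip i h x)) := by
    simp only [entTwo, avgFlip, expecb_sub, expecb_div_const, expecb_add,
      expecb_comp_flipBit i fun y => h y * log (h y)]
    ring
  rw [entb, entb, hmean, hpair]
  ring

lemma DependsOn.avgFlip {h : (Fin n → Fin 2) → ℝ} {i : Fin n} {s : Set (Fin n)}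
    (hh : DependsOn h (insert i s)) : DependsOn (avgFlip i h) s := by
  have hagree : ∀ x y : Fin n → Fin 2, (∀ j ∈ s, x j = y j) → x i = y i →
      h x = h y ∧ h (flipBit x i) = h (flipBit y i) := by
    intro x y hxy hi
    refine ⟨hh fun j hj => ?_, hh fun j hj => ?_⟩ <;> rcases eq_or_ne j i with rfl | hji
    · exact hi
    · exact hxy j (hj.resolve_left hji)
    · rw [flipBit_apply_self, flipBit_apply_self, hi]
    · rw [flipBit_apply_of_ne _ hji, flipBit_apply_of_ne _ hji]
      exact hxy j (hj.resolve_left hji)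
  intro x y hxy
  show (h x + h (flipBit x i)) / 2 = (h y + h (flipBit y i)) / 2
  by_cases hi : x i = y i
  · obtain ⟨h₁, h₂⟩ := hagree x y hxy hi
    rw [h₁, h₂]
  · have hxy' : ∀ j ∈ s, x j = flipBit y i j := by
      intro j hj
      rcases eq_or_ne j i with rfl | hji
      · exact absurd (hxy j hj) hi
      · rw [flipBit_apply_of_ne _ hji]
        exact hxy j hj
    obtain ⟨h₁, h₂⟩ := hagree x (flipBit y i) hxy'
      (by rw [flipBit_apply_self]; exact Fin.two_eq_add_one_of_ne hi)
    rw [h₁, h₂, flipBit_flipBit, add_comm]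

end Entropy

section LogSobolev

variable {n : ℕ}

lemma expecb_triDisc_avgFlip_le {h : (Fin n → Fin 2) → ℝ} (h0 : ∀ x, 0 ≤ h x) {i j : Fin n}
    (hji : j ≠ i) :
    expecb (fun x => triDisc (avgFlip i h x) (avgFlip i h (flipBit x j)))
      ≤ expecb (fun x => triDisc (h x) (h (flipBit x j))) := by
  calc expecb (fun x => triDisc (avgFlip i h x) (avgFlip i h (flipBit x j)))
      ≤ expecb (fun x => (triDisc (h x) (h (flipBit x j))
          + triDisc (h (flipBit x i)) (h (flipBit (flipBit x i) j))) / 2) := by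
        refine expecb_mono fun x => ?_
        rw [avgFlip, avgFlip, flipBit_comm x hji, triDisc_half]
        exact div_le_div_of_nonneg_right (triDisc_add_le (h0 _) (h0 _) (h0 _) (h0 _)) zero_le_two
    _ = expecb (fun x => triDisc (h x) (h (flipBit x j))) := by
        rw [expecb_div_const, expecb_add,
          expecb_comp_flipBit i fun y => triDisc (h y) (h (flipBit y j))]
        ring

/-- Averaging out a coordinate does not increase the remaining terms, as `triDisc` is jointly
convex. -/
theorem entb_le_sum_expecb_triDisc (S : Finset (Fin n)) {h : (Fin n → Fin 2) → ℝ}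
    (h0 : ∀ x, 0 ≤ h x) (hS : DependsOn h (S : Set (Fin n))) :
    entb h ≤ ∑ j ∈ S, expecb (fun x => triDisc (h x) (h (flipBit x j))) / 2 := by
  induction S using Finset.induction_on generalizing h with
  | empty =>
    have hconst : h = fun _ => h 0 := funext fun x => DependsOn.empty (by simpa using hS) x 0
    rw [sum_empty, hconst, entb_const]
  | insert i S hi ih =>
    have havg : entb (avgFlip i h)
        ≤ ∑ j ∈ S, expecb (fun x => triDisc (avgFlip i h x) (avgFlip i h (flipBit x j))) / 2 :=
      ih (fun x => div_nonneg (add_nonneg (h0 _) (h0 _)) zero_le_two)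
        (DependsOn.avgFlip (by simpa using hS))
    rw [sum_insert hi, entb_eq_expecb_entTwo_add_entb_avgFlip i h]
    refine add_le_add ?_ (havg.trans (sum_le_sum fun j hj => ?_))
    · rw [← expecb_div_const]
      exact expecb_mono fun x => entTwo_le_triDisc (h0 _) (h0 _)
    · exact div_le_div_of_nonneg_right
        (expecb_triDisc_avgFlip_le h0 (ne_of_mem_of_not_mem hj hi)) zero_le_two

lemma sq_eq_max_sq_add_max_neg_sq (t : ℝ) : t ^ 2 = max t 0 ^ 2 + max (-t) 0 ^ 2 := by
  rcases le_total t 0 with h | h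
  · rw [max_eq_right h, max_eq_left (neg_nonneg.2 h)]
    ring
  · rw [max_eq_left h, max_eq_right (neg_nonpos.2 h)]
    ring

lemma expecb_sq_sub_flipBit (g : (Fin n → Fin 2) → ℝ) (j : Fin n) :
    expecb (fun x => (g x - g (flipBit x j)) ^ 2)
      = 2 * expecb (fun x => max (g x - g (flipBit x j)) 0 ^ 2) := by
  have hswap : expecb (fun x => max (-(g x - g (flipBit x j))) 0 ^ 2)
      = expecb (fun x => max (g x - g (flipBit x j)) 0 ^ 2) := by
    rw [← expecb_comp_flipBit j]
    simp only [flipBit_flipBit, neg_sub]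
  simp only [sq_eq_max_sq_add_max_neg_sq (_ - _), expecb_add, hswap]
  ring

theorem entb_sq_le_two_mul_expecb_sum_sq (g : (Fin n → Fin 2) → ℝ) :
    entb (fun x => g x ^ 2)
      ≤ 2 * expecb (fun x => ∑ j, max (g x - g (flipBit x j)) 0 ^ 2) := by
  have hS : DependsOn (fun x => g x ^ 2) ((univ : Finset (Fin n)) : Set (Fin n)) := by
    simpa only [coe_univ] using dependsOn_univ _
  calc entb (fun x => g x ^ 2)
      ≤ ∑ j, expecb (fun x => triDisc (g x ^ 2) (g (flipBit x j) ^ 2)) / 2 :=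
        entb_le_sum_expecb_triDisc univ (fun x => sq_nonneg _) hS
    _ ≤ ∑ j, expecb (fun x => (g x - g (flipBit x j)) ^ 2) := by
        refine sum_le_sum fun j _ => ?_
        rw [← expecb_div_const]
        exact expecb_mono fun x => triDisc_sq_le _ _
    _ = 2 * expecb (fun x => ∑ j, max (g x - g (flipBit x j)) 0 ^ 2) := by
        simp only [expecb_sq_sub_flipBit, expecb_sum, mul_sum]

theorem expecb_mul_log_le_entb {h : (Fin n → Fin 2) → ℝ} (h0 : ∀ x, 0 ≤ h x) :
    expecb h * log (1 / prb fun x => 0 < h x) ≤ entb h := by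
  set k : ℝ := ((#{x | 0 < h x} : ℕ) : ℝ)
  have hprb : prb (fun x => 0 < h x) = k / 2 ^ n := prb_eq_card_div _
  rcases (Nat.cast_nonneg _ : (0 : ℝ) ≤ k).eq_or_lt with hk | hk
  · have hzero : h = fun _ => 0 := funext fun x => (h0 x).antisymm' <| not_lt.1 fun hx =>
      Nat.cast_ne_zero.2 (card_ne_zero.2 ⟨x, by simpa using hx⟩) hk.symm
    rw [hzero, entb_const, expecb_const, zero_mul]
  have hsum : ∑ x with 0 < h x, h x = ∑ x, h x :=
    sum_filter_of_ne fun x _ hx => (h0 x).lt_of_ne' hx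
  have hsum_log : ∑ x with 0 < h x, h x * log (h x) = ∑ x, h x * log (h x) :=
    sum_filter_of_ne fun x _ hx => (h0 x).lt_of_ne' (left_ne_zero_of_mul hx)
  have hpos : 0 < ∑ x, h x := by
    obtain ⟨x, hx⟩ := card_pos.1 (Nat.cast_pos.1 hk)
    exact hsum ▸ sum_pos (fun y hy => (mem_filter.1 hy).2) ⟨x, hx⟩
  have hJ := convexOn_mul_log.map_sum_le (t := {x | 0 < h x}) (w := fun _ => k⁻¹) (p := h)
    (fun _ _ => inv_nonneg.2 hk.le) (by rw [sum_const, nsmul_eq_mul, mul_inv_cancel₀ hk.ne'])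
    (fun x _ => Set.mem_Ici.2 (h0 x))
  simp only [smul_eq_mul, ← mul_sum, hsum, hsum_log] at hJ
  have hlog : log (1 / (k / 2 ^ n)) = log (k⁻¹ * ∑ x, h x) - log ((∑ x, h x) / 2 ^ n) := by
    rw [one_div_div, ← log_div (by positivity) (by positivity)]
    congr 1
    field_simp
  have hk0 : k ≠ 0 := hk.ne'
  rw [hprb, hlog, entb, expecb, expecb]
  calc (∑ x, h x) / 2 ^ n * (log (k⁻¹ * ∑ x, h x) - log ((∑ x, h x) / 2 ^ n))
      = k / 2 ^ n * (k⁻¹ * (∑ x, h x) * log (k⁻¹ * ∑ x, h x))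
        - (∑ x, h x) / 2 ^ n * log ((∑ x, h x) / 2 ^ n) := by
        field_simp
    _ ≤ k / 2 ^ n * (k⁻¹ * ∑ x, h x * log (h x))
        - (∑ x, h x) / 2 ^ n * log ((∑ x, h x) / 2 ^ n) := by gcongr
    _ = (∑ x, h x * log (h x)) / 2 ^ n - (∑ x, h x) / 2 ^ n * log ((∑ x, h x) / 2 ^ n) := by
        field_simp

end LogSobolev

theorem le_prb_of_quant_le {n : ℕ} (f : (Fin n → Fin 2) → ℝ) {α a : ℝ} (hα : α ≤ 1)
    (h : quant f α ≤ a) : α ≤ prb fun x => f x ≤ a := by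
  by_contra! hlt
  set T := {z : ℝ | α ≤ prb fun x => f x ≤ z}
  have hT : T.Nonempty := by
    obtain ⟨M, hM⟩ := (Set.finite_range f).bddAbove
    exact ⟨M, hα.trans (prb_eq_one fun x => hM ⟨x, rfl⟩).ge⟩
  -- `f` takes finitely many values, so `T` lies above the least value of `f` exceeding `a`
  have hbelow : ∀ z ∈ T, ∃ x, a < f x ∧ f x ≤ z := fun z hz => by
    by_contra! hno
    exact hlt.not_ge (hz.trans (prb_mono fun x hx => not_lt.1 fun hax => (hno x hax).not_ge hx))
  obtain ⟨x₁, hx₁, -⟩ := hbelow _ hT.some_mem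
  obtain ⟨x₀, hx₀, hmin⟩ :=
    (univ.filter fun x => a < f x).exists_min_image f ⟨x₁, by simpa using hx₁⟩
  have hquant : f x₀ ≤ quant f α := le_csInf hT fun z hz => by
    obtain ⟨x, hax, hxz⟩ := hbelow z hz
    exact (hmin x (by simpa using hax)).trans hxz
  linarith [(mem_filter.1 hx₀).2]

lemma prb_lt_le_half_of_quant_le {n : ℕ} (f : (Fin n → Fin 2) → ℝ) {a : ℝ}
    (h : quant f (1 / 2) ≤ a) : (prb fun x => a < f x) ≤ 1 / 2 := by
  have hsum := prb_add_prb_not fun x => f x ≤ a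
  simp only [not_le] at hsum
  linarith [le_prb_of_quant_le f (by norm_num) h]

lemma max_projIcc_sub_projIcc_zero_le {a b : ℝ} (hab : a ≤ b) (s t : ℝ) :
    max ((Set.projIcc a b hab s : ℝ) - Set.projIcc a b hab t) 0 ≤ max (s - t) 0 := by
  rcases le_total s t with hst | hts
  · have hmono : (Set.projIcc a b hab s : ℝ) ≤ Set.projIcc a b hab t :=
      Set.monotone_projIcc hab hst
    exact max_le ((sub_nonpos.2 hmono).trans (le_max_right _ _)) (le_max_right _ _)
  · refine max_le_max ?_ le_rfl
    calc (Set.projIcc a b hab s : ℝ) - Set.projIcc a b hab t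
        ≤ |(Set.projIcc a b hab s : ℝ) - Set.projIcc a b hab t| := le_abs_self _
      _ ≤ |s - t| := Set.abs_projIcc_sub_projIcc hab
      _ = s - t := abs_of_nonneg (sub_nonneg.2 hts)

/-- Above `b + B` every neighbour of `x` lies above `b`, so the clipped differences vanish. -/
lemma sum_sq_max_projIcc_sub_zero_le {n : ℕ} {f : (Fin n → Fin 2) → ℝ} {φ : ℝ → ℝ}
    (hφ0 : ∀ u, 0 ≤ φ u) (hφmono : Monotone φ) {B : ℝ}
    (hB : ∀ x i, |f x - f (flipBit x i)| ≤ B)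
    (hcond : ∀ x, ∑ i, (max (f x - f (flipBit x i)) 0) ^ 2 ≤ φ (f x))
    {a b : ℝ} (hab : a ≤ b) (x : Fin n → Fin 2) :
    ∑ j, max ((Set.projIcc a b hab (f x) : ℝ) - Set.projIcc a b hab (f (flipBit x j))) 0 ^ 2
      ≤ if a < f x then φ (b + B) else 0 := by
  split_ifs with hax
  · by_cases hfx : f x ≤ b + B
    · calc _ ≤ ∑ j, max (f x - f (flipBit x j)) 0 ^ 2 := sum_le_sum fun j _ =>
            pow_le_pow_left₀ (le_max_right _ _) (max_projIcc_sub_projIcc_zero_le hab _ _) 2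
        _ ≤ φ (f x) := hcond x
        _ ≤ φ (b + B) := hφmono hfx
    · refine (sum_eq_zero fun j _ => ?_).trans_le (hφ0 _)
      have hj := abs_le.1 (hB x j)
      rw [Set.projIcc_of_right_le hab (by linarith), Set.projIcc_of_right_le hab (by linarith)]
      simp
  · refine (sum_eq_zero fun j _ => ?_).le
    rw [Set.projIcc_of_le_left hab (not_lt.1 hax),
      max_eq_right (sub_nonpos.2 (Set.projIcc a b hab _).2.1)]
    simp

lemma sq_projIcc_sub_left_pos_iff {a b : ℝ} (hab : a < b) (s : ℝ) :
    0 < ((Set.projIcc a b hab.le s : ℝ) - a) ^ 2 ↔ a < s := by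
  rw [Set.coe_projIcc]
  refine ⟨fun hs => not_le.1 fun hsa => ?_, fun hs => pow_pos (sub_pos.2 ?_) 2⟩
  · rw [max_eq_left ((min_le_right _ _).trans hsa), sub_self] at hs
    simp at hs
  · exact lt_max_of_lt_right (lt_min hab hs)

lemma le_sqrt_of_sq_mul_log_inv_le {d p q Φ : ℝ} (hp : 0 < p) (hp_half : p ≤ 1 / 2)
    (hq : 0 < q) (hΦ : 0 ≤ Φ) (h : d ^ 2 * q * log (1 / p) ≤ 2 * Φ * p) :
    d ≤ √(72 / 5 * Φ * p / (q * log (exp 2 / (2 * p)))) := by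
  have hlog2 : log 2 ≤ log (1 / p) := log_le_log two_pos (by rw [le_div_iff₀ hp]; linarith)
  have hL : log (exp 2 / (2 * p)) = 2 - log 2 + log (1 / p) := by
    rw [log_div (exp_ne_zero 2) (by positivity), log_exp, log_mul two_ne_zero hp.ne', one_div,
      log_inv]
    ring
  have hL3 : log (exp 2 / (2 * p)) ≤ 3 * log (1 / p) := by
    linarith [log_two_gt_d9]
  have hLpos : 0 < log (exp 2 / (2 * p)) := by
    linarith [log_two_gt_d9, log_two_lt_d9]
  refine (le_abs_self d).trans (abs_le_sqrt ?_)
  rw [le_div_iff₀ (mul_pos hq hLpos)]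
  calc d ^ 2 * (q * log (exp 2 / (2 * p))) ≤ d ^ 2 * q * (3 * log (1 / p)) := by
        rw [← mul_assoc]
        exact mul_le_mul_of_nonneg_left hL3 (by positivity)
    _ ≤ 6 * Φ * p := by linarith
    _ ≤ 72 / 5 * Φ * p := by gcongr; norm_num

theorem stmt_8 {n : ℕ} (f : (Fin n → Fin 2) → ℝ) (φ : ℝ → ℝ)
    (hφ0 : ∀ u, 0 ≤ φ u) (hφmono : Monotone φ)
    (B : ℝ)
    (hB : IsGreatest (Set.range fun p : (Fin n → Fin 2) × Fin n =>
      |f p.1 - f (flipBit p.1 p.2)|) B)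
    (hcond : ∀ x, ∑ i, (max (f x - f (flipBit x i)) 0) ^ 2 ≤ φ (f x))
    (a b : ℝ) (hab : a < b) (ha : quant f (1 / 2) ≤ a)
    (hb : 0 < prb fun x => b ≤ f x) :
    b - a ≤
      Real.sqrt ((72 / 5) * φ (b + B) * (prb fun x => a < f x) /
        ((prb fun x => b ≤ f x) *
          Real.log (Real.exp 2 / (2 * prb fun x => a < f x)))) := by
  set p := prb fun x => a < f x
  set q := prb fun x => b ≤ f x
  have hp_half : p ≤ 1 / 2 := prb_lt_le_half_of_quant_le f ha
  have hp : 0 < p := hb.trans_le (prb_mono fun x hx => hab.trans_le hx)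
  set g : (Fin n → Fin 2) → ℝ := fun x => Set.projIcc a b hab.le (f x) - a
  have hupper : entb (fun x => g x ^ 2) ≤ 2 * (φ (b + B) * p) := by
    refine (entb_sq_le_two_mul_expecb_sum_sq g).trans ?_
    rw [← expecb_ite]
    gcongr
    refine expecb_mono fun x => ?_
    simpa only [g, sub_sub_sub_cancel_right] using sum_sq_max_projIcc_sub_zero_le hφ0 hφmono
      (fun x i => hB.2 ⟨(x, i), rfl⟩) hcond hab.le x
  have hmass : (b - a) ^ 2 * q ≤ expecb fun x => g x ^ 2 := by
    rw [← expecb_ite]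
    refine expecb_mono fun x => ?_
    split_ifs with hbx
    · simp only [g, Set.projIcc_of_right_le _ hbx, le_refl]
    · positivity
  have hsupp : (prb fun x => 0 < g x ^ 2) = p := by
    simp only [g, p, sq_projIcc_sub_left_pos_iff hab]
  have hlower := expecb_mul_log_le_entb fun x => sq_nonneg (g x)
  rw [hsupp] at hlower
  have hlog : 0 ≤ log (1 / p) := log_nonneg (by rw [le_div_iff₀ hp]; linarith)
  refine le_sqrt_of_sq_mul_log_inv_le hp hp_half hb (hφ0 _) ?_
  calc (b - a) ^ 2 * q * log (1 / p) ≤ (expecb fun x => g x ^ 2) * log (1 / p) := by gcongr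
    _ ≤ 2 * φ (b + B) * p := by linarith
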